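/- arXiv:1608.07737 — 3 statements merged into one kernel-verified Lean document; each statement's English description precedes it below -/
import Mathlib

section
/- Let $(p_m)_{m \geq 1}$ be a sequence of real polynomials of degree at most $d$, $p_m(a) = \sum_{i=0}^d A_i(m) a^i$, such that $\lim_{m\to\infty} A_i(m) = 0$ for all $i \geq 2$ and $\lim_{m\to\infty} A_1(m) = A_1 \neq 0$. Then for every $M > 0$ there exists $N > 0$ such that for every $m > N$, the polynomial $p_m$ has at most one real root (counted with multiplicity) in the interval $[-M, M]$. -/
open Filter Polynomial

/-- If the coefficients of `p_m(a) = ∑ A_i(m) a^i` tend to `0` for `i ≥ 2`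
and to `A_1 ≠ 0` for `i = 1`, then for every `M > 0` and all sufficiently large `m`,
`p_m` has at most one root (with multiplicity) in `[-M, M]`: it is not divisible by
`(X - t)(X - u)` for any `t, u ∈ [-M, M]`. -/
theorem stmt_2 (d : ℕ) (hd : 1 ≤ d) (A : ℕ → ℕ → ℝ) (A1 : ℝ) (hA1 : A1 ≠ 0)
    (h1 : Tendsto (fun m => A 1 m) atTop (nhds A1))
    (hi : ∀ i, 2 ≤ i → Tendsto (fun m => A i m) atTop (nhds 0)) :
    ∀ M > (0 : ℝ), ∃ N : ℕ, ∀ m > N,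
      ¬ ∃ (t u : ℝ) (q : Polynomial ℝ), t ∈ Set.Icc (-M) M ∧ u ∈ Set.Icc (-M) M ∧
        (∑ i ∈ Finset.range (d + 1), Polynomial.C (A i m) * Polynomial.X ^ i) =
          (Polynomial.X - Polynomial.C t) * (Polynomial.X - Polynomial.C u) * q := by
  intro M hM
  set K : ℝ := max M 1 with hK
  have hK1 : (1:ℝ) ≤ K := le_max_right _ _
  have hKd : (0:ℝ) < K ^ d := pow_pos (lt_of_lt_of_le one_pos hK1) d
  set ε : ℝ := |A1| / (2 * (d * d + 1) * K ^ d) with hε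
  have hA1pos : (0:ℝ) < |A1| := abs_pos.2 hA1
  have hεpos : 0 < ε := by
    apply div_pos hA1pos
    positivity
  -- eventual coefficient bounds
  have hev1 : ∀ᶠ m in atTop, |A 1 m - A1| < |A1| / 2 := by
    have := Metric.tendsto_nhds.1 h1 (|A1| / 2) (by positivity)
    simpa [Real.dist_eq] using this
  have hev2 : ∀ᶠ m in atTop, ∀ i ∈ Finset.Ico 2 (d + 1), |A i m| < ε := by
    rw [Filter.eventually_all_finset]
    intro i hiI
    have h2i : 2 ≤ i := (Finset.mem_Ico.1 hiI).1
    have := Metric.tendsto_nhds.1 (hi i h2i) ε hεpos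
    simpa [Real.dist_eq] using this
  obtain ⟨N, hN⟩ := Filter.eventually_atTop.1 (hev1.and hev2)
  refine ⟨N, fun m hm => ?_⟩
  obtain ⟨hb1, hb2⟩ := hN m (le_of_lt hm)
  rintro ⟨t, u, q, ht, hu, hpq⟩
  set p : Polynomial ℝ := ∑ i ∈ Finset.range (d + 1), Polynomial.C (A i m) * Polynomial.X ^ i
    with hp
  -- derivative of p is nonzero on [-M, M]
  have hderiv : ∀ s ∈ Set.Icc (-M) M, eval s (derivative p) ≠ 0 := by
    intro s hs hzero
    have hsK : |s| ≤ K := by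
      rw [abs_le]
      exact ⟨le_trans (neg_le_neg (le_max_left M 1)) hs.1, le_trans hs.2 (le_max_left M 1)⟩
    have heval : eval s (derivative p) =
        A 1 m + ∑ i ∈ Finset.Ico 2 (d + 1), A i m * (i * s ^ (i - 1)) := by
      rw [hp, derivative_sum, eval_finset_sum]
      have hterm : ∀ i ∈ Finset.range (d + 1),
          eval s (derivative (Polynomial.C (A i m) * Polynomial.X ^ i))
            = A i m * (i * s ^ (i - 1)) := by
        intro i _
        rw [derivative_C_mul_X_pow]
        simp [mul_assoc]
      rw [Finset.sum_congr rfl hterm,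
        ← Finset.sum_range_add_sum_Ico _ (by omega : 2 ≤ d + 1)]
      norm_num [Finset.sum_range_succ]
    -- bound the tail
    have htail : |∑ i ∈ Finset.Ico 2 (d + 1), A i m * (i * s ^ (i - 1))| < |A1| / 2 := by
      have hbound : ∀ i ∈ Finset.Ico 2 (d + 1),
          |A i m * (i * s ^ (i - 1))| ≤ ε * (d * K ^ d) := by
        intro i hiI
        obtain ⟨h2i, hid⟩ := Finset.mem_Ico.1 hiI
        rw [abs_mul, abs_mul, abs_pow]
        have h1 : |A i m| ≤ ε := le_of_lt (hb2 i hiI)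
        have h2 : |(i:ℝ)| ≤ (d:ℝ) := by
          rw [Nat.abs_cast]
          exact_mod_cast Nat.lt_succ_iff.1 hid
        have h3 : |s| ^ (i - 1) ≤ K ^ d :=
          pow_le_pow_left₀ (abs_nonneg s) hsK (i-1) |>.trans
            (pow_le_pow_right₀ hK1 (by omega))
        calc |A i m| * (|(i:ℝ)| * |s| ^ (i - 1))
            ≤ ε * ((d:ℝ) * K ^ d) := by
              apply mul_le_mul h1 _ (by positivity) (le_of_lt hεpos)
              exact mul_le_mul h2 h3 (by positivity) (Nat.cast_nonneg d)
          _ = ε * (d * K ^ d) := by ring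
      calc |∑ i ∈ Finset.Ico 2 (d + 1), A i m * (i * s ^ (i - 1))|
          ≤ ∑ i ∈ Finset.Ico 2 (d + 1), |A i m * (i * s ^ (i - 1))| :=
            Finset.abs_sum_le_sum_abs _ _
        _ ≤ (Finset.Ico 2 (d + 1)).card • (ε * (d * K ^ d)) :=
            Finset.sum_le_card_nsmul _ _ _ hbound
        _ = ((d + 1 - 2 : ℕ) : ℝ) * (ε * (d * K ^ d)) := by
            rw [Nat.card_Ico, nsmul_eq_mul]
        _ ≤ (d : ℝ) * (ε * (d * K ^ d)) := by
            apply mul_le_mul_of_nonneg_right _ (by positivity)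
            have : d + 1 - 2 ≤ d := by omega
            exact_mod_cast this
        _ = (d * d : ℝ) * ε * K ^ d := by ring
        _ < ((d * d : ℝ) + 1) * ε * K ^ d := by
            apply mul_lt_mul_of_pos_right _ hKd
            apply mul_lt_mul_of_pos_right _ hεpos
            linarith
        _ = |A1| / 2 := by
            rw [hε]
            field_simp
    have hA1m : |A1| / 2 < |A 1 m| := by
      have h2 := abs_sub_abs_le_abs_sub A1 (A 1 m)
      rw [abs_sub_comm] at h2
      linarith
    rw [heval] at hzero
    have : |A 1 m| ≤ |∑ i ∈ Finset.Ico 2 (d + 1), A i m * (i * s ^ (i - 1))| := by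
      have : A 1 m = -(∑ i ∈ Finset.Ico 2 (d + 1), A i m * (i * s ^ (i - 1))) := by
        linarith
      rw [this, abs_neg]
    linarith
  -- from the factorization, derivative has a root in [-M, M]
  have hroot : ∃ s ∈ Set.Icc (-M) M, eval s (derivative p) = 0 := by
    rcases eq_or_ne t u with rfl | htu
    · refine ⟨t, ht, ?_⟩
      rw [hpq]
      simp [derivative_mul]
    · have hpt : eval t p = 0 := by rw [hpq]; simp
      have hpu : eval u p = 0 := by rw [hpq]; simp
      rcases htu.lt_or_gt with hlt | hlt
      · obtain ⟨s, hsI, hs⟩ := exists_deriv_eq_zero hlt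
          ((Polynomial.continuous p).continuousOn) (hpt.trans hpu.symm)
        refine ⟨s, ⟨le_trans ht.1 (le_of_lt hsI.1), le_trans (le_of_lt hsI.2) hu.2⟩, ?_⟩
        rwa [Polynomial.deriv] at hs
      · obtain ⟨s, hsI, hs⟩ := exists_deriv_eq_zero hlt
          ((Polynomial.continuous p).continuousOn) (hpu.trans hpt.symm)
        refine ⟨s, ⟨le_trans hu.1 (le_of_lt hsI.1), le_trans (le_of_lt hsI.2) ht.2⟩, ?_⟩
        rwa [Polynomial.deriv] at hs
  obtain ⟨s, hsI, hs⟩ := hroot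
  exact hderiv s hsI hs
end

section
/- Let $(t_k)$ and $(u_k)$ be bounded real sequences, and for each $k$ let $q_k(a) = \sum_{i=0}^{d-2} B_i(k) a^i$ be real polynomials such that the coefficients of the products $P_k(a) = (a - t_k)(a - u_k) q_k(a)$ satisfy: the coefficient of $a^i$ in $P_k$ tends to $0$ as $k \to \infty$ for every $i \geq 2$. Then $B_i(k) \to 0$ as $k \to \infty$ for every $i \in \{0, \ldots, d-2\}$, and consequently the coefficient of $a^1$ in $P_k$ also tends to $0$. -/
open Filter Polynomial

private lemma bdd_mul_tendsto {c x : ℕ → ℝ} {C : ℝ} (hc : ∀ k, |c k| ≤ C)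
    (hx : Tendsto x atTop (nhds 0)) :
    Tendsto (fun k => c k * x k) atTop (nhds 0) := by
  apply squeeze_zero_norm (a := fun k => C * |x k|)
  · intro k
    simp only [Real.norm_eq_abs, abs_mul]
    exact mul_le_mul_of_nonneg_right (hc k) (abs_nonneg _)
  · have : Tendsto (fun k => |x k|) atTop (nhds 0) := by
      simpa using hx.abs
    simpa using this.const_mul C

private lemma coeff_key (t u : ℝ) (q : Polynomial ℝ) (n : ℕ) :
    ((X - C t) * (X - C u) * q).coeff (n + 2)
      = q.coeff n - (t + u) * q.coeff (n + 1) + t * u * q.coeff (n + 2) := by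
  have h : (X - C t) * (X - C u) * q
      = X ^ 2 * q - C (t + u) * (X * q) + C (t * u) * q := by rw [C_add, C_mul]; ring
  have e1 : (X ^ 2 * q).coeff (n + 2) = q.coeff n := coeff_X_pow_mul q 2 n
  have e2 : (C (t + u) * (X * q)).coeff (n + 2) = (t + u) * q.coeff (n + 1) := by
    rw [coeff_C_mul, show n + 2 = (n + 1) + 1 from rfl, coeff_X_mul]
  have e3 : (C (t * u) * q).coeff (n + 2) = t * u * q.coeff (n + 2) := coeff_C_mul _
  rw [h, coeff_add, coeff_sub, e1, e2, e3]

private lemma coeff_key1 (t u : ℝ) (q : Polynomial ℝ) :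
    ((X - C t) * (X - C u) * q).coeff 1
      = -(t + u) * q.coeff 0 + t * u * q.coeff 1 := by
  have h : (X - C t) * (X - C u) * q
      = X ^ 2 * q - C (t + u) * (X * q) + C (t * u) * q := by rw [C_add, C_mul]; ring
  have e1 : (X ^ 2 * q).coeff 1 = 0 := by
    rw [sq, mul_assoc, show (1:ℕ) = 0 + 1 from rfl, coeff_X_mul, mul_coeff_zero,
      coeff_X_zero, zero_mul]
  have e2 : (C (t + u) * (X * q)).coeff 1 = (t + u) * q.coeff 0 := by
    rw [coeff_C_mul, show (1:ℕ) = 0 + 1 from rfl, coeff_X_mul]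
  have e3 : (C (t * u) * q).coeff 1 = t * u * q.coeff 1 := coeff_C_mul _
  rw [h, coeff_add, coeff_sub, e1, e2, e3]
  ring

/-- If `(t_k)`, `(u_k)` are bounded real sequences and
`P_k(a) = (a - t_k)(a - u_k) q_k(a)` with `q_k(a) = ∑_{i=0}^{d-2} B_i(k) a^i`, and every
coefficient of `P_k` of index `≥ 2` tends to `0`, then `B_i(k) → 0` for every `i ≤ d-2`,
and consequently the coefficient of `a` in `P_k` also tends to `0`. -/
theorem stmt_12 (d : ℕ) (hd : 2 ≤ d) (t u : ℕ → ℝ)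
    (hbdd : ∃ M : ℝ, ∀ k, |t k| ≤ M ∧ |u k| ≤ M)
    (B : ℕ → ℕ → ℝ)
    (P : ℕ → Polynomial ℝ)
    (hP : ∀ k, P k = (Polynomial.X - Polynomial.C (t k)) * (Polynomial.X - Polynomial.C (u k)) *
        (∑ i ∈ Finset.range (d - 1), Polynomial.C (B i k) * Polynomial.X ^ i))
    (hcoeff : ∀ i, 2 ≤ i → Tendsto (fun k => (P k).coeff i) atTop (nhds 0)) :
    (∀ i, i ≤ d - 2 → Tendsto (fun k => B i k) atTop (nhds 0)) ∧
      Tendsto (fun k => (P k).coeff 1) atTop (nhds 0) := by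
  obtain ⟨M, hM⟩ := hbdd
  set Q : ℕ → Polynomial ℝ :=
    fun k => ∑ i ∈ Finset.range (d - 1), Polynomial.C (B i k) * Polynomial.X ^ i with hQ
  have hQcoeff : ∀ k i, (Q k).coeff i = if i < d - 1 then B i k else 0 := by
    intro k i
    simp [hQ, Polynomial.finset_sum_coeff, Polynomial.coeff_C_mul, Polynomial.coeff_X_pow,
      Finset.sum_ite_eq]
  have hPQ : ∀ k, P k = (Polynomial.X - Polynomial.C (t k)) *
      (Polynomial.X - Polynomial.C (u k)) * Q k := hP
  have hs : ∀ k, |t k + u k| ≤ M + M := fun k =>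
    (abs_add_le _ _).trans (add_le_add (hM k).1 (hM k).2)
  have hp : ∀ k, |t k * u k| ≤ M * M := by
    intro k
    rw [abs_mul]
    have h0 : (0:ℝ) ≤ M := le_trans (abs_nonneg _) (hM k).1
    exact mul_le_mul (hM k).1 (hM k).2 (abs_nonneg _) h0
  have main : ∀ n, ∀ i, d - 1 ≤ i + n → Tendsto (fun k => (Q k).coeff i) atTop (nhds 0) := by
    intro n
    induction n with
    | zero =>
      intro i hi
      have : ∀ k, (Q k).coeff i = 0 := by
        intro k; rw [hQcoeff]; simp [Nat.not_lt.mpr (by omega : d - 1 ≤ i)]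
      simpa [this] using (tendsto_const_nhds : Tendsto (fun _ : ℕ => (0:ℝ)) atTop (nhds 0))
    | succ n ih =>
      intro i hi
      by_cases h : d - 1 ≤ i + n
      · exact ih i h
      have hrel : ∀ k, (P k).coeff (i + 2) = (Q k).coeff i
          - (t k + u k) * (Q k).coeff (i + 1) + t k * u k * (Q k).coeff (i + 2) := by
        intro k; rw [hPQ k]; exact coeff_key (t k) (u k) (Q k) i
      have h1 : Tendsto (fun k => (Q k).coeff (i + 1)) atTop (nhds 0) := ih _ (by omega)
      have h2 : Tendsto (fun k => (Q k).coeff (i + 2)) atTop (nhds 0) := ih _ (by omega)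
      have hPt := hcoeff (i + 2) (by omega)
      have key := (hPt.add (bdd_mul_tendsto hs h1)).sub (bdd_mul_tendsto hp h2)
      simp only [add_zero, sub_zero, zero_add] at key
      exact key.congr (fun k => by linarith [hrel k])
  have hB : ∀ i, i ≤ d - 2 → Tendsto (fun k => B i k) atTop (nhds 0) := by
    intro i hi
    have h := main (d - 1 - i) i (by omega)
    have heq : ∀ k, (Q k).coeff i = B i k := by
      intro k; rw [hQcoeff]; simp [(by omega : i < d - 1)]
    exact h.congr heq
  refine ⟨hB, ?_⟩
  have h0 : Tendsto (fun k => (Q k).coeff 0) atTop (nhds 0) := main (d - 1) 0 (by omega)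
  have h1 : Tendsto (fun k => (Q k).coeff 1) atTop (nhds 0) := main (d - 1) 1 (by omega)
  have hrel : ∀ k, (P k).coeff 1
      = -(t k + u k) * (Q k).coeff 0 + t k * u k * (Q k).coeff 1 := by
    intro k; rw [hPQ k]; exact coeff_key1 (t k) (u k) (Q k)
  have hs' : ∀ k, |-(t k + u k)| ≤ M + M := fun k => by rw [abs_neg]; exact hs k
  have key := (bdd_mul_tendsto hs' h0).add (bdd_mul_tendsto hp h1)
  simp only [add_zero] at key
  exact key.congr (fun k => (hrel k).symm)
end

section
/- Let $q : \mathbb{N} \to \mathbb{R}$ be given by a real polynomial in $m$, let $A_1 \neq 0$, and let $(s_m)$ be a sequence of real numbers with $s_m \to s$ such that for all sufficiently large $m$: $q(m)$ has the sign behavior of a polynomial (eventually positive, eventually negative, or identically zero), $s_m$ is the unique root in $(s-1,s+1)$ of a differentiable function $p_m$ with $p_m(s) = m^{2-2d} q(m)$ and $|p_m'(a) - A_1| < |A_1|/2$ for all $a \in (s-1, s+1)$. Then either $s_m \geq s$ for all sufficiently large $m$, or $s_m \leq s$ for all sufficiently large $m$. -/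
open Filter Polynomial

lemma poly_sign_aux (q : Polynomial ℝ) :
    (∀ᶠ x : ℝ in atTop, 0 ≤ q.eval x) ∨ (∀ᶠ x : ℝ in atTop, q.eval x ≤ 0) := by
  rcases le_or_gt 0 q.leadingCoeff with hlc | hlc
  · left
    rcases le_or_gt q.degree 0 with hdeg | hdeg
    · have hc := Polynomial.eq_C_of_degree_le_zero hdeg
      have h0 : 0 ≤ q.coeff 0 := by
        rcases eq_or_ne (q.coeff 0) 0 with h | h
        · exact h.ge
        · have := hlc; rw [hc, Polynomial.leadingCoeff_C] at this; exact this
      filter_upwards with x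
      rw [hc]; simpa
    · have := q.tendsto_atTop_of_leadingCoeff_nonneg hdeg hlc
      filter_upwards [this.eventually_ge_atTop 0] with x hx
      simpa using hx
  · right
    rcases le_or_gt q.degree 0 with hdeg | hdeg
    · have hc := Polynomial.eq_C_of_degree_le_zero hdeg
      have h0 : q.coeff 0 ≤ 0 := by
        have := hlc.le; rwa [hc, Polynomial.leadingCoeff_C] at this
      filter_upwards with x
      rw [hc]; simpa
    · have := q.tendsto_atBot_of_leadingCoeff_nonpos hdeg hlc.le
      filter_upwards [this.eventually_le_atBot 0] with x hx
      simpa using hx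

/-- Lemma 6.6, monotone approach of the converging root: if
`p_m(s) = m^{2-2d} q(m)` for a real polynomial `q`, the root `s_m` of `p_m` in
`(s-1, s+1)` is unique, `s_m → s`, and on `(s-1, s+1)` the derivative of `p_m` stays
within `|A_1|/2` of `A_1 ≠ 0` (for all sufficiently large `m`), then eventually
`s_m ≥ s`, or eventually `s_m ≤ s`. -/
theorem stmt_14 (d : ℕ) (hd : 1 ≤ d) (q : Polynomial ℝ) (A1 : ℝ) (hA1 : A1 ≠ 0)
    (s : ℝ) (sm : ℕ → ℝ) (hlim : Tendsto sm atTop (nhds s))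
    (p : ℕ → ℝ → ℝ) (hdiff : ∀ m, Differentiable ℝ (p m))
    (h : ∃ N : ℕ, ∀ m : ℕ, m > N →
      (p m s = (m : ℝ) ^ ((2 : ℤ) - 2 * (d : ℤ)) * q.eval (m : ℝ)) ∧
      (sm m ∈ Set.Ioo (s - 1) (s + 1) ∧ p m (sm m) = 0 ∧
        ∀ x ∈ Set.Ioo (s - 1) (s + 1), p m x = 0 → x = sm m) ∧
      (∀ a ∈ Set.Ioo (s - 1) (s + 1), |deriv (p m) a - A1| < |A1| / 2)) :
    (∃ N : ℕ, ∀ m : ℕ, m > N → sm m ≥ s) ∨ (∃ N : ℕ, ∀ m : ℕ, m > N → sm m ≤ s) := by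
  obtain ⟨N, hN⟩ := h
  have hsmem : s ∈ Set.Ioo (s - 1) (s + 1) := by constructor <;> linarith
  -- eventual sign of q on ℕ
  have hsign : (∀ᶠ m : ℕ in atTop, 0 ≤ q.eval (m : ℝ)) ∨
      (∀ᶠ m : ℕ in atTop, q.eval (m : ℝ) ≤ 0) := by
    rcases poly_sign_aux q with hq | hq
    · exact Or.inl (tendsto_natCast_atTop_atTop.eventually hq)
    · exact Or.inr (tendsto_natCast_atTop_atTop.eventually hq)
  -- key: sign of p m s for large m
  have key : ∀ m > N, m ≥ 1 → ∀ x ∈ Set.Ioo (s - 1) (s + 1),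
      True := fun _ _ _ _ _ => trivial
  -- strict monotonicity / antitonicity on the interval
  have hconv : Convex ℝ (Set.Ioo (s - 1) (s + 1)) := convex_Ioo _ _
  have hmono : ∀ m > N, 0 < A1 → StrictMonoOn (p m) (Set.Ioo (s - 1) (s + 1)) := by
    intro m hm hA
    apply StrictMonoOn.mono (s := Set.Ioo (s-1) (s+1))
      (strictMonoOn_of_deriv_pos hconv ((hdiff m).continuous.continuousOn) ?_) le_rfl
    intro x hx
    rw [interior_Ioo] at hx
    have := (hN m hm).2.2 x hx
    have h2 : |A1| = A1 := abs_of_pos hA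
    rw [h2] at this
    have := abs_lt.mp this
    linarith [this.1]
  have hanti : ∀ m > N, A1 < 0 → StrictAntiOn (p m) (Set.Ioo (s - 1) (s + 1)) := by
    intro m hm hA
    apply StrictAntiOn.mono (s := Set.Ioo (s-1) (s+1))
      (strictAntiOn_of_deriv_neg hconv ((hdiff m).continuous.continuousOn) ?_) le_rfl
    intro x hx
    rw [interior_Ioo] at hx
    have := (hN m hm).2.2 x hx
    have h2 : |A1| = -A1 := abs_of_neg hA
    rw [h2] at this
    have := abs_lt.mp this
    linarith [this.2]
  have hzpow : ∀ m : ℕ, m ≥ 1 → (0:ℝ) < (m : ℝ) ^ ((2 : ℤ) - 2 * (d : ℤ)) := by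
    intro m hm
    have : (0:ℝ) < (m:ℝ) := by exact_mod_cast hm
    positivity
  rcases hsign with hq | hq <;> rcases hA1.lt_or_gt with hA | hA
  -- q ≥ 0, A1 < 0 : p m s ≥ 0, p anti ⇒ sm ≥ s
  · obtain ⟨M, hM⟩ := eventually_atTop.mp hq
    left
    refine ⟨max N M, fun m hm => ?_⟩
    have hmN : m > N := lt_of_le_of_lt (le_max_left _ _) hm
    have hmM : m ≥ M := le_of_lt (lt_of_le_of_lt (le_max_right _ _) hm)
    have hm1 : m ≥ 1 := le_trans (Nat.one_le_iff_ne_zero.mpr (by omega)) le_rfl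
    obtain ⟨hps, ⟨hmem, hroot, _⟩, _⟩ := hN m hmN
    by_contra hlt
    push_neg at hlt
    have hps0 : 0 ≤ p m s := by
      rw [hps]; exact mul_nonneg (hzpow m hm1).le (hM m hmM)
    have := hanti m hmN hA hmem hsmem hlt
    rw [hroot] at this
    linarith
  -- q ≥ 0, A1 > 0 : p mono ⇒ sm ≤ s
  · obtain ⟨M, hM⟩ := eventually_atTop.mp hq
    right
    refine ⟨max N M, fun m hm => ?_⟩
    have hmN : m > N := lt_of_le_of_lt (le_max_left _ _) hm
    have hmM : m ≥ M := le_of_lt (lt_of_le_of_lt (le_max_right _ _) hm)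
    have hm1 : m ≥ 1 := by omega
    obtain ⟨hps, ⟨hmem, hroot, _⟩, _⟩ := hN m hmN
    by_contra hlt
    push_neg at hlt
    have hps0 : 0 ≤ p m s := by
      rw [hps]; exact mul_nonneg (hzpow m hm1).le (hM m hmM)
    have := hmono m hmN hA hsmem hmem hlt
    rw [hroot] at this
    linarith
  -- q ≤ 0, A1 < 0 : p anti, p m s ≤ 0 ⇒ sm ≤ s
  · obtain ⟨M, hM⟩ := eventually_atTop.mp hq
    right
    refine ⟨max N M, fun m hm => ?_⟩
    have hmN : m > N := lt_of_le_of_lt (le_max_left _ _) hm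
    have hmM : m ≥ M := le_of_lt (lt_of_le_of_lt (le_max_right _ _) hm)
    have hm1 : m ≥ 1 := by omega
    obtain ⟨hps, ⟨hmem, hroot, _⟩, _⟩ := hN m hmN
    by_contra hlt
    push_neg at hlt
    have hps0 : p m s ≤ 0 := by
      rw [hps]; exact mul_nonpos_of_nonneg_of_nonpos (hzpow m hm1).le (hM m hmM)
    have := hanti m hmN hA hsmem hmem hlt
    rw [hroot] at this
    linarith
  -- q ≤ 0, A1 > 0 : p mono, p m s ≤ 0 ⇒ sm ≥ s
  · obtain ⟨M, hM⟩ := eventually_atTop.mp hq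
    left
    refine ⟨max N M, fun m hm => ?_⟩
    have hmN : m > N := lt_of_le_of_lt (le_max_left _ _) hm
    have hmM : m ≥ M := le_of_lt (lt_of_le_of_lt (le_max_right _ _) hm)
    have hm1 : m ≥ 1 := by omega
    obtain ⟨hps, ⟨hmem, hroot, _⟩, _⟩ := hN m hmN
    by_contra hlt
    push_neg at hlt
    have hps0 : p m s ≤ 0 := by
      rw [hps]; exact mul_nonpos_of_nonneg_of_nonpos (hzpow m hm1).le (hM m hmM)
    have := hmono m hmN hA hmem hsmem hlt
    rw [hroot] at this
    linarith
end
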